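/- arXiv:2404.17429 — 2 statements merged into one kernel-verified Lean document; each statement's English description precedes it below -/
import Mathlib

section
/- Let ρ > 0 and w ~ N(0, ρ²) with moments m_t = E[w^t], and B_T = (m_{i+j})_{0≤i,j≤T} its Hankel matrix of moments. Then tr(B_T)/m_{2T} → 1 as T → ∞; consequently λ_max(B_T)/m_{2T} → 1 and the dominance ratio λ_max(B_T)/tr(B_T) → 1 as T → ∞. -/
open MeasureTheory ProbabilityTheory Filter

/-!
Stein's identity for `N(0, ρ²)` gives `m (2k + 2) = (2k + 1) ρ² m (2k)`, so the ratio of consecutive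
even moments tends to infinity and the last diagonal entry `m (2T)` of `B_T` dominates its trace.
`B_T` is the Gram matrix of the monomials `1, x, …, x^T` in `L²(N(0, ρ²))`, hence positive
semidefinite, so `m (2T) ≤ λ_max(B_T) ≤ tr B_T`, and both remaining limits follow by squeezing.
-/

open Finset Topology
open scoped NNReal

theorem tendsto_sum_range_succ_div_of_tendsto_ratio_atTop {c : ℕ → ℝ} (hc : ∀ k, 0 < c k)
    (hratio : Tendsto (fun k => c (k + 1) / c k) atTop atTop) :
    Tendsto (fun T => (∑ k ∈ range (T + 1), c k) / c T) atTop (𝓝 1) := by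
  set S : ℕ → ℝ := fun T => (∑ k ∈ range (T + 1), c k) / c T
  set r : ℕ → ℝ := fun k => c (k + 1) / c k
  have hr_pos (k : ℕ) : 0 < r k := div_pos (hc _) (hc _)
  have hS_succ (T : ℕ) : S (T + 1) = S T / r T + 1 := by
    simp only [S, r, sum_range_succ _ (T + 1)]
    field_simp [(hc T).ne', (hc (T + 1)).ne']
  obtain ⟨K, hK⟩ := eventually_atTop.1 (hratio.eventually_ge_atTop 2)
  set M := max (S K) 2
  have hS_le (T : ℕ) (hT : K ≤ T) : S T ≤ M := by
    induction T, hT using Nat.le_induction with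
    | base => exact le_max_left _ _
    | succ T hT ih =>
      have : S T / r T ≤ M / 2 :=
        (div_le_div_of_nonneg_right ih (hr_pos T).le).trans
          (div_le_div_of_nonneg_left (by positivity) two_pos (hK T hT))
      rw [hS_succ]
      linarith [le_max_right (S K) 2]
  have hS_nonneg (T : ℕ) : 0 ≤ S T :=
    div_nonneg (sum_nonneg fun k _ => (hc k).le) (hc T).le
  have hquot : Tendsto (fun T => S T / r T) atTop (𝓝 0) :=
    squeeze_zero' (Eventually.of_forall fun T => div_nonneg (hS_nonneg T) (hr_pos T).le)
      (eventually_atTop.2 ⟨K, fun T hT => div_le_div_of_nonneg_right (hS_le T hT) (hr_pos T).le⟩)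
      (tendsto_const_nhds.div_atTop hratio)
  rw [← tendsto_add_atTop_iff_nat 1]
  simpa only [hS_succ, zero_add] using hquot.add_const 1

theorem tendsto_div_nhds_one_of_le_of_le {α : Type*} {l : Filter α} {a b c : α → ℝ}
    (hc : ∀ x, 0 < c x) (hca : ∀ x, c x ≤ a x) (hab : ∀ x, a x ≤ b x)
    (hbc : Tendsto (fun x => b x / c x) l (𝓝 1)) :
    Tendsto (fun x => a x / c x) l (𝓝 1) ∧ Tendsto (fun x => a x / b x) l (𝓝 1) := by
  have hac : Tendsto (fun x => a x / c x) l (𝓝 1) :=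
    tendsto_of_tendsto_of_tendsto_of_le_of_le tendsto_const_nhds hbc
      (fun x => (one_le_div (hc x)).2 (hca x))
      (fun x => div_le_div_of_nonneg_right (hab x) (hc x).le)
  refine ⟨hac, ?_⟩
  have hquot := hac.div hbc one_ne_zero
  rw [div_one] at hquot
  refine hquot.congr fun x => ?_
  exact div_div_div_cancel_right₀ (hc x).ne' _ _

namespace Matrix

variable {n : Type*} [Fintype n] [DecidableEq n] {A : Matrix n n ℝ}

lemma IsHermitian.apply_self_eq_sum_eigenvalues_mul_sq (hA : A.IsHermitian) (i : n) :
    A i i = ∑ j, hA.eigenvalues j * (hA.eigenvectorUnitary : Matrix n n ℝ) i j ^ 2 := by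
  conv_lhs => rw [hA.spectral_theorem]
  simp [Unitary.conjStarAlgAut_apply, mul_apply, diagonal_apply, sq, mul_comm, mul_left_comm]

lemma IsHermitian.sum_eigenvectorUnitary_sq (hA : A.IsHermitian) (i : n) :
    ∑ j, (hA.eigenvectorUnitary : Matrix n n ℝ) i j ^ 2 = 1 := by
  have h := congr_fun₂ (mem_unitaryGroup_iff.mp hA.eigenvectorUnitary.2) i i
  simpa [mul_apply, sq] using h

lemma IsHermitian.apply_self_le_iSup_eigenvalues (hA : A.IsHermitian) (i : n) :
    A i i ≤ ⨆ j, hA.eigenvalues j := by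
  have hbdd : BddAbove (Set.range hA.eigenvalues) := (Set.finite_range _).bddAbove
  calc A i i = ∑ j, hA.eigenvalues j * (hA.eigenvectorUnitary : Matrix n n ℝ) i j ^ 2 :=
        hA.apply_self_eq_sum_eigenvalues_mul_sq i
    _ ≤ ∑ j, (⨆ k, hA.eigenvalues k) * (hA.eigenvectorUnitary : Matrix n n ℝ) i j ^ 2 :=
        sum_le_sum fun j _ => mul_le_mul_of_nonneg_right (le_ciSup hbdd j) (sq_nonneg _)
    _ = ⨆ k, hA.eigenvalues k := by rw [← mul_sum, hA.sum_eigenvectorUnitary_sq, mul_one]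

lemma PosSemidef.iSup_eigenvalues_le_trace [Nonempty n] (hA : A.PosSemidef) :
    ⨆ j, hA.isHermitian.eigenvalues j ≤ A.trace := by
  rw [hA.isHermitian.trace_eq_sum_eigenvalues]
  exact ciSup_le fun j => single_le_sum (fun i _ => hA.eigenvalues_nonneg i) (mem_univ j)

noncomputable def hankelMoments (μ : Measure ℝ) (n : ℕ) : Matrix (Fin n) (Fin n) ℝ :=
  of fun i j => ∫ x, x ^ ((i : ℕ) + j) ∂μ

theorem posSemidef_hankelMoments {μ : Measure ℝ} (hμ : ∀ n : ℕ, Integrable (fun x => x ^ n) μ)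
    (n : ℕ) : (hankelMoments μ n).PosSemidef := by
  have hmem (i : ℕ) : MemLp (fun x : ℝ => x ^ i) 2 μ :=
    (memLp_two_iff_integrable_sq (by fun_prop)).2 (by simpa [← pow_mul] using hμ (i * 2))
  have hgram : hankelMoments μ n = gram ℝ fun i : Fin n => (hmem i).toLp := by
    ext i j
    rw [gram_apply, hankelMoments, of_apply, L2.inner_def]
    refine integral_congr_ae ?_
    filter_upwards [(hmem i).coeFn_toLp, (hmem j).coeFn_toLp] with x hi hj
    simp [hi, hj, pow_add, mul_comm]
  exact hgram ▸ posSemidef_gram ℝ _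

end Matrix

namespace ProbabilityTheory

lemma integrable_pow_gaussianReal (μ : ℝ) (v : ℝ≥0) (n : ℕ) :
    Integrable (fun x => x ^ n) (gaussianReal μ v) :=
  integrable_pow_of_mem_interior_integrableExpSet (X := id) (by simp) n

lemma integrable_gaussianPDFReal_mul_pow (μ : ℝ) {v : ℝ≥0} (hv : v ≠ 0) (n : ℕ) :
    Integrable fun x => gaussianPDFReal μ v x * x ^ n := by
  have h := integrable_pow_gaussianReal μ v n
  rw [gaussianReal_of_var_ne_zero μ hv,
    integrable_withDensity_iff_integrable_smul' (measurable_gaussianPDF μ v)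
      (ae_of_all _ fun _ => gaussianPDF_lt_top)] at h
  simpa only [toReal_gaussianPDF, smul_eq_mul] using h

lemma hasDerivAt_gaussianPDFReal (μ : ℝ) (v : ℝ≥0) (x : ℝ) :
    HasDerivAt (gaussianPDFReal μ v) (-((x - μ) / v) * gaussianPDFReal μ v x) x := by
  have hexponent : HasDerivAt (fun y => -(y - μ) ^ 2 / (2 * v)) (-((x - μ) / v)) x :=
    (((hasDerivAt_id' x).sub_const μ).pow 2).neg.div_const (2 * (v : ℝ)) |>.congr_deriv (by ring)
  rw [gaussianPDFReal_def]
  exact (hexponent.exp.const_mul _).congr_deriv (by ring)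

-- Stein's identity `E[(X - μ) f(X)] = v E[f'(X)]` for `f = x ^ (n + 1)`.
theorem integral_sub_mul_pow_succ_gaussianReal (μ : ℝ) (v : ℝ≥0) (n : ℕ) :
    ∫ x, (x - μ) * x ^ (n + 1) ∂gaussianReal μ v = (n + 1) * v * ∫ x, x ^ n ∂gaussianReal μ v := by
  rcases eq_or_ne v 0 with rfl | hv
  · simp [gaussianReal_zero_var]
  have hint := integrable_gaussianPDFReal_mul_pow μ hv
  have hibp := integral_mul_deriv_eq_deriv_mul_of_integrable
    (u := fun x => x ^ (n + 1)) (u' := fun x => (n + 1 : ℝ) * x ^ n)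
    (v := gaussianPDFReal μ v) (v' := fun x => -((x - μ) / v) * gaussianPDFReal μ v x)
    (fun x _ => by simpa using hasDerivAt_pow (n + 1) x)
    (fun x _ => hasDerivAt_gaussianPDFReal μ v x)
    (by
      refine (((hint (n + 2)).sub ((hint (n + 1)).const_mul μ)).const_mul (-(v : ℝ)⁻¹)).congr
        (ae_of_all _ fun x => ?_)
      simp only [Pi.mul_apply, Pi.sub_apply]
      field_simp
      ring)
    (((hint n).const_mul (n + 1 : ℝ)).congr (ae_of_all _ fun x => by simp only [Pi.mul_apply]; ring))
    ((hint (n + 1)).congr (ae_of_all _ fun x => by simp only [Pi.mul_apply]; ring))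
  simp only [integral_gaussianReal_eq_integral_smul hv, smul_eq_mul]
  calc ∫ x, gaussianPDFReal μ v x * ((x - μ) * x ^ (n + 1))
      = -v * ∫ x, x ^ (n + 1) * (-((x - μ) / v) * gaussianPDFReal μ v x) := by
        rw [← integral_const_mul]
        congr 1 with x
        field_simp
    _ = (n + 1) * v * ∫ x, gaussianPDFReal μ v x * x ^ n := by
        rw [hibp, neg_mul_neg, ← integral_const_mul, ← integral_const_mul]
        congr 1 with x
        ring

theorem integral_pow_add_two_gaussianReal (v : ℝ≥0) (n : ℕ) :
    ∫ x, x ^ (n + 2) ∂gaussianReal 0 v = (n + 1) * v * ∫ x, x ^ n ∂gaussianReal 0 v := by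
  simpa [← pow_succ'] using integral_sub_mul_pow_succ_gaussianReal 0 v n

lemma integral_pow_two_mul_gaussianReal_pos {v : ℝ≥0} (hv : v ≠ 0) (k : ℕ) :
    0 < ∫ x, x ^ (2 * k) ∂gaussianReal 0 v := by
  induction k with
  | zero => simp
  | succ k ih =>
    rw [mul_add_one, integral_pow_add_two_gaussianReal]
    positivity

lemma tendsto_integral_pow_two_mul_succ_div_gaussianReal_atTop {v : ℝ≥0} (hv : v ≠ 0) :
    Tendsto (fun k : ℕ => (∫ x, x ^ (2 * (k + 1)) ∂gaussianReal 0 v) /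
      ∫ x, x ^ (2 * k) ∂gaussianReal 0 v) atTop atTop := by
  have hratio (k : ℕ) : (∫ x, x ^ (2 * (k + 1)) ∂gaussianReal 0 v) /
      ∫ x, x ^ (2 * k) ∂gaussianReal 0 v = (2 * k + 1) * v := by
    rw [mul_add_one, integral_pow_add_two_gaussianReal,
      mul_div_cancel_right₀ _ (integral_pow_two_mul_gaussianReal_pos hv k).ne']
    push_cast
    ring
  simp only [hratio]
  refine Tendsto.atTop_mul_const (by positivity) ?_
  exact tendsto_atTop_add_const_right _ 1
    (tendsto_natCast_atTop_atTop.const_mul_atTop two_pos)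

end ProbabilityTheory

theorem stmt7 (ρ : ℝ) (hρ : 0 < ρ)
    (m : ℕ → ℝ)
    (hm : ∀ t, m t = ∫ x, x ^ t ∂(gaussianReal 0 (Real.toNNReal (ρ ^ 2))))
    (B : (T : ℕ) → Matrix (Fin (T + 1)) (Fin (T + 1)) ℝ)
    (hBdef : ∀ T (i j : Fin (T + 1)), B T i j = m ((i : ℕ) + (j : ℕ)))
    (hB : ∀ T, (B T).IsHermitian) :
    Tendsto (fun T => (B T).trace / m (2 * T)) atTop (nhds 1) ∧
    Tendsto (fun T => (⨆ i, (hB T).eigenvalues i) / m (2 * T)) atTop (nhds 1) ∧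
    Tendsto (fun T => (⨆ i, (hB T).eigenvalues i) / (B T).trace) atTop (nhds 1) := by
  have hv : (ρ ^ 2).toNNReal ≠ 0 := by simpa using hρ.ne'
  have hm_pos (T : ℕ) : 0 < m (2 * T) := hm _ ▸ integral_pow_two_mul_gaussianReal_pos hv T
  have hB_eq (T : ℕ) : B T = Matrix.hankelMoments (gaussianReal 0 (ρ ^ 2).toNNReal) (T + 1) := by
    ext i j
    rw [hBdef, hm, Matrix.hankelMoments, Matrix.of_apply]
  have hpsd (T : ℕ) : (B T).PosSemidef :=
    hB_eq T ▸ Matrix.posSemidef_hankelMoments (integrable_pow_gaussianReal 0 _) (T + 1)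
  have htrace (T : ℕ) : (B T).trace = ∑ k ∈ range (T + 1), m (2 * k) := by
    simp only [Matrix.trace, Matrix.diag, hBdef, ← two_mul]
    exact Fin.sum_univ_eq_sum_range (fun k => m (2 * k)) (T + 1)
  have hdiag (T : ℕ) : m (2 * T) ≤ ⨆ i, (hB T).eigenvalues i := by
    simpa [hBdef, two_mul] using (hB T).apply_self_le_iSup_eigenvalues (Fin.last T)
  have htr : Tendsto (fun T => (B T).trace / m (2 * T)) atTop (𝓝 1) := by
    simp only [htrace]
    refine tendsto_sum_range_succ_div_of_tendsto_ratio_atTop hm_pos ?_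
    simpa only [hm] using tendsto_integral_pow_two_mul_succ_div_gaussianReal_atTop hv
  exact ⟨htr, tendsto_div_nhds_one_of_le_of_le hm_pos hdiag
    (fun T => (hpsd T).iSup_eigenvalues_le_trace) htr⟩
end

section
/- Let ε > 0, T ∈ ℕ*, w a real-valued random variable, and a = (a_t)_{0≤t≤T} real numbers with a_0 ≠ 0. Suppose K > 0 satisfies |a_t| ≤ K^t |a_0| for all t ∈ {0,...,T-1}, |a_T + ε| ≤ K^T |a_0|, and |a_T - ε| ≤ K^T |a_0|. Then P(|f(a,w)| ≥ ε) ≥ P(|w| ≥ 2K), where f(a,w) = Σ_{t=0}^T a_{T-t} w^t. -/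
open MeasureTheory

theorem stmt17 {Ω : Type*} [MeasurableSpace Ω] (μ : Measure Ω) [IsProbabilityMeasure μ]
    (ε : ℝ) (hε : 0 < ε) (T : ℕ) (hT : 1 ≤ T)
    (w : Ω → ℝ) (hw : Measurable w)
    (a : ℕ → ℝ) (ha : a 0 ≠ 0) (K : ℝ) (hK : 0 < K)
    (hgeo : ∀ t < T, |a t| ≤ K ^ t * |a 0|)
    (hplus : |a T + ε| ≤ K ^ T * |a 0|)
    (hminus : |a T - ε| ≤ K ^ T * |a 0|) :
    μ {ω | 2 * K ≤ |w ω|} ≤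
      μ {ω | ε ≤ |∑ t ∈ Finset.range (T + 1), a (T - t) * w ω ^ t|} := by
  obtain ⟨T', rfl⟩ : ∃ T', T = T' + 1 := ⟨T - 1, by omega⟩
  apply measure_mono
  intro ω hω
  simp only [Set.mem_setOf_eq] at hω ⊢
  set x := w ω with hxdef
  have hy0 : 0 < |x| := lt_of_lt_of_le (by linarith) hω
  have ha0 : 0 < |a 0| := abs_pos.mpr ha
  -- bound on |a T|
  have haT : |a (T' + 1)| + ε ≤ K ^ (T' + 1) * |a 0| := by
    rcases le_or_gt 0 (a (T' + 1)) with h | h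
    · rw [abs_of_nonneg (by linarith : (0:ℝ) ≤ a (T' + 1) + ε)] at hplus
      rw [abs_of_nonneg h]; linarith
    · rw [abs_of_nonpos (by linarith : a (T' + 1) - ε ≤ 0)] at hminus
      rw [abs_of_neg h]; linarith
  -- bound on the lower-order part
  have hSsum : |∑ t ∈ Finset.range (T' + 1), a (T' + 1 - t) * x ^ t|
      ≤ ∑ t ∈ Finset.range (T' + 1), K ^ (T' + 1 - t) * |a 0| * |x| ^ t - ε := by
    have tri := Finset.abs_sum_le_sum_abs
      (fun t => a (T' + 1 - t) * x ^ t) (Finset.range (T' + 1))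
    have step : ∑ t ∈ Finset.range (T' + 1), |a (T' + 1 - t) * x ^ t|
        ≤ ∑ t ∈ Finset.range (T' + 1), K ^ (T' + 1 - t) * |a 0| * |x| ^ t - ε := by
      rw [Finset.sum_range_succ' (fun t => |a (T' + 1 - t) * x ^ t|) T',
          Finset.sum_range_succ' (fun t => K ^ (T' + 1 - t) * |a 0| * |x| ^ t) T']
      have harith : ∀ t : ℕ, T' + 1 - (t + 1) = T' - t := fun t => by omega
      simp only [harith, Nat.sub_zero, pow_zero, mul_one]
      have hsum : ∑ t ∈ Finset.range T', |a (T' - t) * x ^ (t + 1)|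
          ≤ ∑ t ∈ Finset.range T', K ^ (T' - t) * |a 0| * |x| ^ (t + 1) := by
        refine Finset.sum_le_sum fun t ht => ?_
        rw [abs_mul, abs_pow]
        exact mul_le_mul_of_nonneg_right (hgeo (T' - t) (by omega)) (by positivity)
      linarith [hsum, haT]
    linarith [tri, step]
  -- geometric bound
  have haux : ∀ n : ℕ, ∑ t ∈ Finset.range n, ((1:ℝ)/2) ^ (n - t) ≤ 1 := by
    intro n
    induction n with
    | zero => simp
    | succ n ih =>
      rw [Finset.sum_range_succ]
      have hhalf : ∑ t ∈ Finset.range n, ((1:ℝ)/2) ^ (n + 1 - t)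
          = (1/2) * ∑ t ∈ Finset.range n, ((1:ℝ)/2) ^ (n - t) := by
        rw [Finset.mul_sum]
        refine Finset.sum_congr rfl fun t ht => ?_
        have htn : t < n := Finset.mem_range.mp ht
        have : n + 1 - t = (n - t) + 1 := by omega
        rw [this, pow_succ]; ring
      rw [hhalf]
      have h1 : n + 1 - n = 1 := by omega
      rw [h1, pow_one]
      linarith
  have hgeom : ∑ t ∈ Finset.range (T' + 1), K ^ (T' + 1 - t) * |a 0| * |x| ^ t
      ≤ |a 0| * |x| ^ (T' + 1) := by
    have hterm : ∀ t ∈ Finset.range (T' + 1),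
        K ^ (T' + 1 - t) * |a 0| * |x| ^ t
          ≤ |a 0| * |x| ^ (T' + 1) * ((1:ℝ)/2) ^ (T' + 1 - t) := by
      intro t ht
      have htle : t < T' + 1 := Finset.mem_range.mp ht
      have hKle : K ≤ |x| / 2 := by linarith
      have h1 : K ^ (T' + 1 - t) ≤ (|x| / 2) ^ (T' + 1 - t) :=
        pow_le_pow_left₀ hK.le hKle _
      have hxpow : |x| ^ (T' + 1 - t) * |x| ^ t = |x| ^ (T' + 1) := by
        rw [← pow_add]; congr 1; omega
      have e1 : (|x| / 2) ^ (T' + 1 - t) * |a 0| * |x| ^ t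
          = |a 0| * (|x| ^ (T' + 1 - t) * |x| ^ t) * ((1:ℝ)/2) ^ (T' + 1 - t) := by
        rw [show |x| / 2 = |x| * (1/2) by ring, mul_pow]; ring
      calc K ^ (T' + 1 - t) * |a 0| * |x| ^ t
          ≤ (|x| / 2) ^ (T' + 1 - t) * |a 0| * |x| ^ t := by
            exact mul_le_mul_of_nonneg_right
              (mul_le_mul_of_nonneg_right h1 (abs_nonneg _)) (by positivity)
        _ = |a 0| * (|x| ^ (T' + 1 - t) * |x| ^ t) * ((1:ℝ)/2) ^ (T' + 1 - t) := e1
        _ = |a 0| * |x| ^ (T' + 1) * ((1:ℝ)/2) ^ (T' + 1 - t) := by rw [hxpow]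
    calc ∑ t ∈ Finset.range (T' + 1), K ^ (T' + 1 - t) * |a 0| * |x| ^ t
        ≤ ∑ t ∈ Finset.range (T' + 1),
            |a 0| * |x| ^ (T' + 1) * ((1:ℝ)/2) ^ (T' + 1 - t) :=
          Finset.sum_le_sum hterm
      _ = |a 0| * |x| ^ (T' + 1)
            * ∑ t ∈ Finset.range (T' + 1), ((1:ℝ)/2) ^ (T' + 1 - t) := by
          rw [← Finset.mul_sum]
      _ ≤ |a 0| * |x| ^ (T' + 1) * 1 :=
          mul_le_mul_of_nonneg_left (haux (T' + 1)) (by positivity)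
      _ = |a 0| * |x| ^ (T' + 1) := mul_one _
  -- put things together
  rw [Finset.sum_range_succ]
  simp only [Nat.sub_self, pow_zero]
  set S := ∑ t ∈ Finset.range (T' + 1), a (T' + 1 - t) * x ^ t with hS
  have htri : |a 0 * x ^ (T' + 1)| ≤ |S + a 0 * x ^ (T' + 1)| + |S| := by
    calc |a 0 * x ^ (T' + 1)| = |(S + a 0 * x ^ (T' + 1)) + -S| := by congr 1; ring
      _ ≤ |S + a 0 * x ^ (T' + 1)| + |-S| := abs_add_le _ _
      _ = |S + a 0 * x ^ (T' + 1)| + |S| := by rw [abs_neg]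
  have habs0 : |a 0 * x ^ (T' + 1)| = |a 0| * |x| ^ (T' + 1) := by
    rw [abs_mul, abs_pow]
  linarith [hSsum, hgeom, htri]
end
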